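/- arXiv:1307.3648 — 3 statements merged into one kernel-verified Lean document; each statement's English description precedes it below -/
import Mathlib

section
/- Let f : ℕ → ℕ be computable and suppose f(n)/n computably converges to ∞, i.e., there is a computable function K ↦ n_K such that f(n) ≥ K·n for all n ≥ n_K. Then f is manageable. -/
/-! A solution `x` of `f (A₀ + ∑ xᵢ Aᵢ) < B₀ + ∑ xᵢ Bᵢ` with all `Aᵢ > 0` is a priori bounded:
for `K = B₀ + ∑ Bᵢ` the right-hand side is at most `K (A₀ + ∑ xᵢ Aᵢ)`, so `f n ≥ K n` for
`n ≥ n_K` forces `A₀ + ∑ xᵢ Aᵢ < n_K`, hence every `xᵢ < n_K`. Deciding whether a solution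
exists is therefore a search over the finitely many tuples with entries below the computable
bound `n_K`. -/

/-- Manageability for `ℕ`-valued functions: there is an algorithm which, given
`A₀, A₁, …, A_k ∈ ℕ \ {0}` and `B₀, B₁, …, B_k ∈ ℕ`, decides whether
`f(A₀ + x₁A₁ + ⋯ + x_kA_k) < B₀ + x₁B₁ + ⋯ + x_kB_k` holds for some `x₁, …, x_k ∈ ℕ`. -/
def ManageableNat (f : ℕ → ℕ) : Prop :=
  ∀ k : ℕ, ∃ dec : (ℕ × (Fin k → ℕ)) × (ℕ × (Fin k → ℕ)) → Bool,
    Computable dec ∧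
    ∀ (A₀ : ℕ) (A : Fin k → ℕ) (B₀ : ℕ) (B : Fin k → ℕ),
      0 < A₀ → (∀ i, 0 < A i) →
      (dec ((A₀, A), (B₀, B)) = true ↔
        ∃ x : Fin k → ℕ,
          f (A₀ + ∑ i, x i * A i) < B₀ + ∑ i, x i * B i)

def finDigits (k b m : ℕ) : Fin k → ℕ := fun i => m / b ^ (i : ℕ) % b

def ofFinDigits {k : ℕ} (b : ℕ) (x : Fin k → ℕ) : ℕ := ∑ i, x i * b ^ (i : ℕ)

theorem ofFinDigits_succ {k : ℕ} (b : ℕ) (x : Fin (k + 1) → ℕ) :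
    ofFinDigits b x = x 0 + b * ofFinDigits b (Fin.tail x) := by
  simp only [ofFinDigits, Fin.sum_univ_succ, Finset.mul_sum, Fin.tail]
  congr 1
  · simp
  · exact Finset.sum_congr rfl fun i _ => by rw [Fin.val_succ, pow_succ]; ring

theorem ofFinDigits_lt {k b : ℕ} {x : Fin k → ℕ} (hx : ∀ i, x i < b) :
    ofFinDigits b x < b ^ k := by
  induction k with
  | zero => simp [ofFinDigits]
  | succ k ih =>
    have htail := ih (x := Fin.tail x) fun i => hx i.succ
    rw [ofFinDigits_succ, pow_succ']
    calc x 0 + b * ofFinDigits b (Fin.tail x)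
        < b * (ofFinDigits b (Fin.tail x) + 1) := by linarith [hx 0]
      _ ≤ b * b ^ k := Nat.mul_le_mul_left b htail

theorem finDigits_ofFinDigits {k b : ℕ} {x : Fin k → ℕ} (hx : ∀ i, x i < b) :
    finDigits k b (ofFinDigits b x) = x := by
  induction k with
  | zero => exact funext fun i => i.elim0
  | succ k ih =>
    have hb : 0 < b := (Nat.zero_le _).trans_lt (hx 0)
    have htail := ih (x := Fin.tail x) fun i => hx i.succ
    funext i
    refine Fin.cases ?_ (fun j => ?_) i
    · simp [finDigits, ofFinDigits_succ, Nat.mod_eq_of_lt (hx 0)]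
    · show _ = Fin.tail x j
      rw [← congrFun htail j]
      simp only [finDigits, ofFinDigits_succ, Fin.val_succ, pow_succ', ← Nat.div_div_eq_div_mul,
        Nat.add_mul_div_left _ _ hb, Nat.div_eq_of_lt (hx 0), zero_add]

theorem Nat.rec_or_eq_decide_exists_lt (p : ℕ → Bool) (n : ℕ) :
    Nat.rec (motive := fun _ => Bool) false (fun m acc => acc || p m) n =
      decide (∃ m < n, p m = true) := by
  induction n with
  | zero => simp
  | succ n ih =>
    simp only [ih, Nat.lt_succ_iff_lt_or_eq, or_and_right, exists_or, exists_eq_left]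
    simp

section Computability

variable {α : Type*} [Primcodable α]

theorem Primrec.nat_pow : Primrec₂ ((· ^ ·) : ℕ → ℕ → ℕ) :=
  Primrec₂.unpaired'.1 Nat.Primrec.pow

theorem Primrec.fin_sum : ∀ {k : ℕ} {g : α → Fin k → ℕ}, (∀ i, Primrec fun a => g a i) →
    Primrec fun a => ∑ i, g a i
  | 0, _, _ => by simpa using Primrec.const 0
  | k + 1, g, hg => by
    simp only [Fin.sum_univ_succ]
    exact Primrec.nat_add.comp (hg 0) (Primrec.fin_sum fun i => hg i.succ)

theorem Primrec.add_sum_mul (k : ℕ) :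
    Primrec₂ fun (c : ℕ × (Fin k → ℕ)) (x : Fin k → ℕ) => c.1 + ∑ i, x i * c.2 i :=
  Primrec.nat_add.comp (Primrec.fst.comp .fst) <| Primrec.fin_sum fun i =>
    Primrec.nat_mul.comp (Primrec.fin_app.comp .snd (.const i))
      (Primrec.fin_app.comp (Primrec.snd.comp .fst) (.const i))

theorem Primrec.finDigits (k : ℕ) : Primrec₂ (finDigits k) :=
  Primrec.fin_curry.2 <| Primrec.nat_mod.comp
    (Primrec.nat_div.comp (Primrec.snd.comp Primrec.fst)
      (Primrec.nat_pow.comp (Primrec.fst.comp Primrec.fst) (Primrec.fin_val.comp Primrec.snd)))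
    (Primrec.fst.comp Primrec.fst)

theorem Computable.decide_exists_lt {p : α → ℕ → Bool} (hp : Computable₂ p) {b : α → ℕ}
    (hb : Computable b) : Computable fun a => decide (∃ m < b a, p a m = true) :=
  (Computable.nat_rec hb (Computable.const false)
    (Primrec.or.to_comp.comp (Computable.snd.comp Computable.snd)
      (hp.comp Computable.fst (Computable.fst.comp Computable.snd))).to₂).of_eq
    fun a => Nat.rec_or_eq_decide_exists_lt (p a) (b a)

theorem Computable.exists_decide_exists_of_bounded {k : ℕ} {p : α → (Fin k → ℕ) → Bool}
    (hp : Computable₂ p) {N : α → ℕ} (hN : Computable N) :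
    ∃ dec : α → Bool, Computable dec ∧ ∀ a, (∀ x, p a x = true → ∀ i, x i < N a) →
      (dec a = true ↔ ∃ x, p a x = true) := by
  -- the tuples with entries below `N a` are the base-`N a` digit strings of the `m < N a ^ k`
  refine ⟨fun a => decide (∃ m < N a ^ k, p a (finDigits k (N a) m) = true), ?_, ?_⟩
  · refine Computable.decide_exists_lt ?_ ((Primrec.nat_pow.comp .id (.const k)).to_comp.comp hN)
    exact hp.comp .fst ((Primrec.finDigits k).to_comp.comp (hN.comp .fst) .snd)
  · intro a hbound
    simp only [decide_eq_true_iff]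
    constructor
    · rintro ⟨m, -, hm⟩
      exact ⟨_, hm⟩
    · rintro ⟨x, hx⟩
      have hlt := hbound x hx
      exact ⟨ofFinDigits (N a) x, ofFinDigits_lt hlt, by rwa [finDigits_ofFinDigits hlt]⟩

end Computability

theorem add_sum_mul_le_mul_add_sum {k C A₀ B₀ : ℕ} {A B : Fin k → ℕ} (h₀ : B₀ ≤ C * A₀)
    (h : ∀ i, B i ≤ C * A i) (x : Fin k → ℕ) :
    B₀ + ∑ i, x i * B i ≤ C * (A₀ + ∑ i, x i * A i) := by
  rw [mul_add, Finset.mul_sum]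
  refine Nat.add_le_add h₀ (Finset.sum_le_sum fun i _ => ?_)
  calc x i * B i ≤ x i * (C * A i) := Nat.mul_le_mul_left _ (h i)
    _ = C * (x i * A i) := by ring

theorem lt_of_apply_add_sum_mul_lt {f : ℕ → ℕ} {C N : ℕ} (hf : ∀ n, N ≤ n → C * n ≤ f n)
    {k A₀ B₀ : ℕ} {A B x : Fin k → ℕ} (hA : ∀ i, 0 < A i) (h₀ : B₀ ≤ C * A₀)
    (hB : ∀ i, B i ≤ C * A i) (hx : f (A₀ + ∑ i, x i * A i) < B₀ + ∑ i, x i * B i) (i : Fin k) :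
    x i < N := by
  by_contra! hi
  have hn : x i ≤ A₀ + ∑ j, x j * A j :=
    calc x i ≤ x i * A i := Nat.le_mul_of_pos_right _ (hA i)
      _ ≤ ∑ j, x j * A j := Finset.single_le_sum (f := fun j => x j * A j)
          (fun j _ => Nat.zero_le _) (Finset.mem_univ i)
      _ ≤ _ := Nat.le_add_left _ _
  have := hf _ (hi.trans hn)
  have := add_sum_mul_le_mul_add_sum h₀ hB x
  omega

/-- If `f` is computable and `f(n)/n` computably converges to `∞` (witnessed by a computable
function `K ↦ n_K` with `f(n) ≥ K·n` for all `n ≥ n_K`), then `f` is manageable. -/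
theorem stmt_3 (f : ℕ → ℕ) (hf : Computable f)
    (nK : ℕ → ℕ) (hnK : Computable nK)
    (h : ∀ K n : ℕ, nK K ≤ n → K * n ≤ f n) :
    ManageableNat f := by
  intro k
  have hL := (Primrec.add_sum_mul k).to_comp
  have hK : Computable fun B : ℕ × (Fin k → ℕ) => B.1 + ∑ i, B.2 i :=
    (Primrec.nat_add.comp .fst (Primrec.fin_sum fun i =>
      Primrec.fin_app.comp .snd (.const i))).to_comp
  obtain ⟨dec, hdec, hspec⟩ := Computable.exists_decide_exists_of_bounded
    (p := fun (q : (ℕ × (Fin k → ℕ)) × (ℕ × (Fin k → ℕ))) x =>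
      decide (f (q.1.1 + ∑ i, x i * q.1.2 i) < q.2.1 + ∑ i, x i * q.2.2 i))
    (Primrec.nat_lt.decide.to_comp.comp (hf.comp (hL.comp (Computable.fst.comp .fst) .snd))
      (hL.comp (Computable.snd.comp .fst) .snd))
    (hnK.comp (hK.comp .snd))
  refine ⟨dec, hdec, fun A₀ A B₀ B hA₀ hA => ?_⟩
  simp only [decide_eq_true_iff] at hspec
  refine hspec _ fun x hx => lt_of_apply_add_sum_mul_lt (h _) hA ?_ (fun i => ?_) hx
  · exact (Nat.le_add_right _ _).trans (Nat.le_mul_of_pos_right _ hA₀)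
  · exact ((Finset.single_le_sum (fun j _ => Nat.zero_le (B j)) (Finset.mem_univ i)).trans
      (Nat.le_add_left _ _)).trans (Nat.le_mul_of_pos_right _ (hA i))
end

section
/- Let T : ℕ → ℝ>0 satisfy T(n) = o(n·log n) (i.e., lim_{n→∞} T(n)/(n log n) = 0). Define g(n) = n·log n / T(n) for n ≥ 2 and g(0) = g(1) = 1. Then for every integer q ≥ 2 there exists a constant c ∈ ℕ with c ≥ max{T(0), T(1)} such that for all n ≥ 2: 3·(q·n^((log q)/√g(n)) − 1)/(q − 1) ≤ n − 3 − n/√g(n) + c·√g(n)/(log n). -/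
open Filter Real

/-- If `T(n) = o(n log n)` (positive real-valued) and `g(n) = n log n / T(n)` for `n ≥ 2`,
`g(0) = g(1) = 1`, then for every integer `q ≥ 2` there is a constant `c ∈ ℕ` with
`c ≥ max {T(0), T(1)}` such that for all `n ≥ 2`:
`3(q·n^((log q)/√g(n)) − 1)/(q − 1) ≤ n − 3 − n/√g(n) + c·√g(n)/(log n)`
(logarithms base 2). -/
theorem stmt_6 (T : ℕ → ℝ) (hT : ∀ n, 0 < T n)
    (hsmall : Tendsto (fun n : ℕ => T n / ((n : ℝ) * Real.logb 2 n)) atTop (nhds 0))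
    (g : ℕ → ℝ)
    (hg : ∀ n : ℕ, 2 ≤ n → g n = (n : ℝ) * Real.logb 2 n / T n)
    (hg0 : g 0 = 1) (hg1 : g 1 = 1)
    (q : ℕ) (hq : 2 ≤ q) :
    ∃ c : ℕ, T 0 ≤ (c : ℝ) ∧ T 1 ≤ (c : ℝ) ∧
      ∀ n : ℕ, 2 ≤ n →
        3 * ((q : ℝ) * (n : ℝ) ^ (Real.logb 2 q / Real.sqrt (g n)) - 1) / ((q : ℝ) - 1)
          ≤ (n : ℝ) - 3 - (n : ℝ) / Real.sqrt (g n)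
            + (c : ℝ) * Real.sqrt (g n) / Real.logb 2 n := by
  have hq1 : (1:ℝ) < (q:ℝ) := by exact_mod_cast lt_of_lt_of_le one_lt_two hq
  have hlogq : 0 < Real.logb 2 q := Real.logb_pos one_lt_two hq1
  -- positivity facts for n ≥ 2
  have hfacts : ∀ n : ℕ, 2 ≤ n → 0 < Real.logb 2 n ∧ 0 < g n := by
    intro n hn
    have hn1 : (1:ℝ) < (n:ℝ) := by exact_mod_cast lt_of_lt_of_le one_lt_two hn
    have hlogn : 0 < Real.logb 2 n := Real.logb_pos one_lt_two hn1
    refine ⟨hlogn, ?_⟩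
    rw [hg n hn]
    exact div_pos (mul_pos (by linarith) hlogn) (hT n)
  -- g tends to infinity
  have hratio : Tendsto (fun n : ℕ => T n / ((n : ℝ) * Real.logb 2 n)) atTop
      (nhdsWithin 0 (Set.Ioi 0)) := by
    rw [tendsto_nhdsWithin_iff]
    refine ⟨hsmall, ?_⟩
    filter_upwards [eventually_ge_atTop 2] with n hn
    have hn1 : (1:ℝ) < (n:ℝ) := by exact_mod_cast lt_of_lt_of_le one_lt_two hn
    exact div_pos (hT n) (mul_pos (by linarith) (hfacts n hn).1)
  have hgtop : Tendsto g atTop atTop := by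
    refine hratio.inv_tendsto_nhdsGT_zero.congr' ?_
    filter_upwards [eventually_ge_atTop 2] with n hn
    simp only [Pi.inv_apply, inv_div]
    exact (hg n hn).symm
  -- choose threshold
  set K : ℝ := max (2 * Real.logb 2 q) 4 with hK
  obtain ⟨N1, hN1⟩ := eventually_atTop.mp (hgtop.eventually_ge_atTop (K ^ 2))
  set N : ℕ := max N1 400 with hNdef
  set f : ℕ → ℝ := fun n =>
    (3 * ((q : ℝ) * (n : ℝ) ^ (Real.logb 2 q / Real.sqrt (g n)) - 1) / ((q : ℝ) - 1)
      - ((n : ℝ) - 3 - (n : ℝ) / Real.sqrt (g n))) * Real.logb 2 n / Real.sqrt (g n) with hf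
  refine ⟨⌈T 0⌉₊ + ⌈T 1⌉₊ + ∑ i ∈ Finset.range N, ⌈f i⌉₊, ?_, ?_, ?_⟩
  · have h1 := Nat.le_ceil (T 0)
    have h2 : ((⌈T 0⌉₊ : ℕ) : ℝ) ≤ ((⌈T 0⌉₊ + ⌈T 1⌉₊ + ∑ i ∈ Finset.range N, ⌈f i⌉₊ : ℕ) : ℝ) := by
      exact_mod_cast Nat.le_add_right _ _ |>.trans (Nat.le_refl _) |>.trans
        (by omega : ⌈T 0⌉₊ + ⌈T 1⌉₊ ≤ ⌈T 0⌉₊ + ⌈T 1⌉₊ + ∑ i ∈ Finset.range N, ⌈f i⌉₊)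
    linarith
  · have h1 := Nat.le_ceil (T 1)
    have h2 : ((⌈T 1⌉₊ : ℕ) : ℝ) ≤ ((⌈T 0⌉₊ + ⌈T 1⌉₊ + ∑ i ∈ Finset.range N, ⌈f i⌉₊ : ℕ) : ℝ) := by
      exact_mod_cast (by omega : ⌈T 1⌉₊ ≤ ⌈T 0⌉₊ + ⌈T 1⌉₊ + ∑ i ∈ Finset.range N, ⌈f i⌉₊)
    linarith
  · intro n hn
    obtain ⟨hlogn, hgpos⟩ := hfacts n hn
    have hn1 : (1:ℝ) ≤ (n:ℝ) := by exact_mod_cast le_trans (by norm_num) hn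
    have hs : 0 < Real.sqrt (g n) := Real.sqrt_pos.mpr hgpos
    rcases lt_or_ge n N with hlt | hge
    · -- small n: use the constant
      have hfle : f n ≤ (⌈f n⌉₊ : ℝ) := Nat.le_ceil _
      have hsum : ⌈f n⌉₊ ≤ ⌈T 0⌉₊ + ⌈T 1⌉₊ + ∑ i ∈ Finset.range N, ⌈f i⌉₊ :=
        le_trans (Finset.single_le_sum (f := fun i => ⌈f i⌉₊)
          (fun i _ => Nat.zero_le _) (Finset.mem_range.mpr hlt)) (Nat.le_add_left _ _)
      have hcast : (⌈f n⌉₊ : ℝ) ≤ ((⌈T 0⌉₊ + ⌈T 1⌉₊ + ∑ i ∈ Finset.range N, ⌈f i⌉₊ : ℕ) : ℝ) := by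
        exact_mod_cast hsum
      have h1 : f n * (Real.sqrt (g n) / Real.logb 2 n)
          ≤ ((⌈T 0⌉₊ + ⌈T 1⌉₊ + ∑ i ∈ Finset.range N, ⌈f i⌉₊ : ℕ) : ℝ)
            * (Real.sqrt (g n) / Real.logb 2 n) :=
        mul_le_mul_of_nonneg_right (hfle.trans hcast) (by positivity)
      have h2 : f n * (Real.sqrt (g n) / Real.logb 2 n)
          = 3 * ((q : ℝ) * (n : ℝ) ^ (Real.logb 2 q / Real.sqrt (g n)) - 1) / ((q : ℝ) - 1)
            - ((n : ℝ) - 3 - (n : ℝ) / Real.sqrt (g n)) := by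
        have helper : ∀ D s l : ℝ, s ≠ 0 → l ≠ 0 → D * l / s * (s / l) = D := by
          intros D s l hs hl
          field_simp
        exact helper _ _ _ hs.ne' hlogn.ne'
      rw [h2] at h1
      have h3 : ((⌈T 0⌉₊ + ⌈T 1⌉₊ + ∑ i ∈ Finset.range N, ⌈f i⌉₊ : ℕ) : ℝ)
          * (Real.sqrt (g n) / Real.logb 2 n)
          = ((⌈T 0⌉₊ + ⌈T 1⌉₊ + ∑ i ∈ Finset.range N, ⌈f i⌉₊ : ℕ) : ℝ)
            * Real.sqrt (g n) / Real.logb 2 n := by ring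
      rw [h3] at h1
      linarith
    · -- large n: asymptotic regime
      have hN1' : K ^ 2 ≤ g n := hN1 n (le_trans (le_max_left _ _) hge)
      have hKpos : (0:ℝ) < K := lt_of_lt_of_le (by norm_num) (le_max_right _ _)
      have hKs : K ≤ Real.sqrt (g n) := by
        rw [show K = Real.sqrt (K ^ 2) from (Real.sqrt_sq hKpos.le).symm]
        exact Real.sqrt_le_sqrt hN1'
      have hs4 : (4:ℝ) ≤ Real.sqrt (g n) := le_trans (le_max_right _ _) hKs
      have hslogq : 2 * Real.logb 2 q ≤ Real.sqrt (g n) := le_trans (le_max_left _ _) hKs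
      have hn400 : (400:ℝ) ≤ (n:ℝ) := by
        exact_mod_cast le_trans (le_max_right N1 400) hge
      set r : ℝ := Real.sqrt n with hr
      have hr2 : r ^ 2 = (n:ℝ) := Real.sq_sqrt (by linarith)
      have hr20 : (20:ℝ) ≤ r := by
        rw [hr, show (20:ℝ) = Real.sqrt 400 by
          rw [show (400:ℝ) = 20 ^ 2 by norm_num, Real.sqrt_sq (by norm_num)]]
        exact Real.sqrt_le_sqrt hn400
      have hα : Real.logb 2 q / Real.sqrt (g n) ≤ 1 / 2 := by
        rw [div_le_iff₀ hs]
        linarith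
      have hx1 : (1:ℝ) ≤ (n:ℝ) ^ (Real.logb 2 q / Real.sqrt (g n)) :=
        Real.one_le_rpow hn1 (by positivity)
      have hxr : (n:ℝ) ^ (Real.logb 2 q / Real.sqrt (g n)) ≤ r := by
        calc (n:ℝ) ^ (Real.logb 2 q / Real.sqrt (g n)) ≤ (n:ℝ) ^ ((1:ℝ)/2) :=
              Real.rpow_le_rpow_of_exponent_le hn1 hα
          _ = r := by rw [hr, Real.sqrt_eq_rpow]
      have hLx : 3 * ((q : ℝ) * (n : ℝ) ^ (Real.logb 2 q / Real.sqrt (g n)) - 1) / ((q : ℝ) - 1)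
          ≤ 6 * (n:ℝ) ^ (Real.logb 2 q / Real.sqrt (g n)) := by
        have hq2 : (2:ℝ) ≤ (q:ℝ) := by exact_mod_cast hq
        rw [div_le_iff₀ (by linarith : (0:ℝ) < (q:ℝ) - 1)]
        nlinarith [mul_nonneg (sub_nonneg.mpr hq2)
          (by linarith : (0:ℝ) ≤ (n:ℝ) ^ (Real.logb 2 q / Real.sqrt (g n)))]
      have hns : (n:ℝ) / Real.sqrt (g n) ≤ (n:ℝ) / 4 :=
        div_le_div_of_nonneg_left (by linarith) (by norm_num) hs4
      have hcnn : 0 ≤ ((⌈T 0⌉₊ + ⌈T 1⌉₊ + ∑ i ∈ Finset.range N, ⌈f i⌉₊ : ℕ) : ℝ)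
          * Real.sqrt (g n) / Real.logb 2 n := by positivity
      nlinarith [hr20, hr2, hxr, hx1]
end

section
/- If T : ℕ → ℝ≥0 satisfies T(n₀) < n₀ + 1 for some n₀ ∈ ℕ, then the problem of deciding whether a given (one-tape or multi-tape) Turing machine runs in time T is decidable. -/
open scoped NNReal

/-!
If `T n₀ < n₀ + 1`, a machine running in time `T` halts within `n₀` steps on every input of
length `n₀`; padding such an input with blanks does not change the run, so its first halting
time `t` satisfies `t ≤ T n` for all `n ≥ n₀`. Conversely such a `t ≤ n₀` bounds the run on every
extension of the prefix, since the machine cannot read past cell `n₀` in that time. Running in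
time `T` is therefore equivalent to finitely many conditions of the form "the run on `w` stops
within `t` steps", with `w` and `t` ranging over fixed finite sets determined by `T` and `n₀`.
Each condition is primitive recursive in the machine once both tapes are stored as zippers.
-/

/-- A description (code) of a deterministic Turing machine with a read-only input tape and
one binary work tape: the entry at index `4·s + 2·a + b` of the list (if any) gives, for
state `s`, input symbol `a` and work symbol `b`, the new state, the symbol written on the
work tape, and the movement directions (`true` = right) of the input and work heads.
States with a missing entry are halting. -/
abbrev Machine : Type := List (ℕ × Bool × Bool × Bool)

namespace Machine

/-- The symbol in cell `i` of the input tape carrying input `w` (blank = `false`). -/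
def read (w : List Bool) (i : ℤ) : Bool :=
  if 0 ≤ i then w.getD i.toNat false else false

/-- Configurations: current state, input head position, work tape, work head position. -/
abbrev Cfg : Type := ℕ × ℤ × (ℤ → Bool) × ℤ

/-- One computation step; `none` if the machine has halted. -/
def step (m : Machine) (w : List Bool) (c : Cfg) : Option Cfg :=
  match m[4 * c.1 + (cond (read w c.2.1) 2 0) + (cond (c.2.2.1 c.2.2.2) 1 0)]? with
  | none => none
  | some (s', wr, di, dw) =>
      some (s', c.2.1 + (if di then 1 else -1),
        Function.update c.2.2.1 c.2.2.2 wr, c.2.2.2 + (if dw then 1 else -1))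

/-- The configuration reached after `t` steps on input `w` (`none` once halted). -/
def cfgAt (m : Machine) (w : List Bool) : ℕ → Option Cfg
  | 0 => some (0, 0, fun _ => false, 0)
  | t + 1 => (cfgAt m w t).bind (step m w)

/-- `m` runs in time `T`: on every input `w` it halts after at most `T(|w|)` steps. -/
def RunsInTime (m : Machine) (T : ℕ → ℝ≥0) : Prop :=
  ∀ w : List Bool, ∃ t : ℕ, (t : ℝ≥0) ≤ T w.length ∧ cfgAt m w (t + 1) = none

end Machine

namespace Machine

theorem read_take_of_lt {w : List Bool} {n : ℕ} {i : ℤ} (hi : i < n) :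
    read (w.take n) i = read w i := by
  unfold read
  split_ifs with h0
  · lift i to ℕ using h0
    simp [List.getD_eq_getElem?_getD, List.getElem?_take_of_lt (by omega : i < n)]
  · rfl

theorem read_take_le (w : List Bool) (n : ℕ) (i : ℤ) : read (w.take n) i ≤ read w i := by
  unfold read
  split_ifs
  · simp only [List.getD_eq_getElem?_getD, List.getElem?_take]
    split_ifs <;> simp
  · rfl

theorem read_append_replicate_false (v : List Bool) (k : ℕ) :
    read (v ++ List.replicate k false) = read v := by
  funext i
  unfold read
  split_ifs
  · simp only [List.getD_eq_getElem?_getD, List.getElem?_append, List.getElem?_replicate]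
    split_ifs <;> simp_all
  · rfl

theorem step_eq_none_iff {m : Machine} {w : List Bool} {c : Cfg} :
    step m w c = none ↔
      m.length ≤ 4 * c.1 + cond (read w c.2.1) 2 0 + cond (c.2.2.1 c.2.2.2) 1 0 := by
  rw [← List.getElem?_eq_none_iff]
  unfold step
  split <;> simp_all

theorem step_congr {m : Machine} {w w' : List Bool} {c : Cfg}
    (h : read w c.2.1 = read w' c.2.1) : step m w c = step m w' c := by
  unfold step
  rw [h]

/-- Reading `true` instead of `false` only increases the rule index, so a missing rule stays
missing. -/
theorem step_eq_none_of_read_le {m : Machine} {v w : List Bool} {c : Cfg}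
    (hle : read v c.2.1 ≤ read w c.2.1) (h : step m v c = none) : step m w c = none := by
  rw [step_eq_none_iff] at h ⊢
  have hcond : ∀ a b : Bool, a ≤ b → cond a 2 0 ≤ cond b 2 0 := by decide
  have := hcond _ _ hle
  omega

theorem inputPos_le_of_step_eq_some {m : Machine} {w : List Bool} {c d : Cfg}
    (h : step m w c = some d) : d.2.1 ≤ c.2.1 + 1 := by
  unfold step at h
  split at h
  · simp at h
  · cases h
    dsimp only
    split_ifs <;> omega

theorem inputPos_le_of_cfgAt_eq_some {m : Machine} {w : List Bool} {t : ℕ} {d : Cfg}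
    (h : cfgAt m w t = some d) : d.2.1 ≤ t := by
  induction t generalizing d with
  | zero => cases h; simp
  | succ t ih =>
    obtain ⟨c, hc, hd⟩ := Option.bind_eq_some_iff.1 h
    have hstep := inputPos_le_of_step_eq_some hd
    have hprev := ih hc
    push_cast
    omega

/-- Within `t ≤ N` steps the machine reads only input cells `i < N`. -/
theorem cfgAt_eq_of_read_eq_on {m : Machine} {w w' : List Bool} {N : ℕ}
    (h : ∀ i < (N : ℤ), read w i = read w' i) {t : ℕ} (ht : t ≤ N) :
    cfgAt m w t = cfgAt m w' t := by
  induction t with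
  | zero => rfl
  | succ t ih =>
    rw [cfgAt, cfgAt, ih (by omega)]
    cases hc : cfgAt m w' t with
    | none => rfl
    | some c =>
      have hpos := inputPos_le_of_cfgAt_eq_some hc
      exact step_congr (h _ (by omega))

theorem cfgAt_eq_of_read_eq {m : Machine} {w w' : List Bool} (h : read w = read w') :
    cfgAt m w = cfgAt m w' :=
  funext fun t => cfgAt_eq_of_read_eq_on (N := t) (fun i _ => congrFun h i) le_rfl

theorem cfgAt_succ_eq_none_of_read_le {m : Machine} {v w : List Bool} {s : ℕ}
    (hagree : ∀ i < (s : ℤ), read v i = read w i) (hle : ∀ i, read v i ≤ read w i)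
    (h : cfgAt m v (s + 1) = none) : cfgAt m w (s + 1) = none := by
  rw [cfgAt, ← cfgAt_eq_of_read_eq_on hagree le_rfl]
  rw [cfgAt] at h
  cases hc : cfgAt m v s with
  | none => rfl
  | some c =>
    rw [hc] at h
    exact step_eq_none_of_read_le (hle _) h

end Machine

theorem List.getD_tail {α : Type*} (l : List α) (j : ℕ) (d : α) :
    l.tail.getD j d = l.getD (j + 1) d := by
  simp [List.getD_eq_getElem?_getD]

/-- A tape with a head: the cells left of the head (nearest first), and the cells from the head
rightwards. Cells beyond both lists are blank. -/
abbrev Zipper : Type := List Bool × List Bool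

namespace Zipper

def head (z : Zipper) : Bool := z.2.getD 0 false

def moveRight (z : Zipper) : Zipper := (z.head :: z.1, z.2.tail)

def moveLeft (z : Zipper) : Zipper := (z.1.tail, z.1.getD 0 false :: z.2)

def move (z : Zipper) (d : Bool) : Zipper := cond d z.moveRight z.moveLeft

def write (z : Zipper) (b : Bool) : Zipper := (z.1, b :: z.2.tail)

def Represents (z : Zipper) (F : ℤ → Bool) (p : ℤ) : Prop :=
  (∀ j : ℕ, z.2.getD j false = F (p + j)) ∧ ∀ j : ℕ, z.1.getD j false = F (p - 1 - j)

namespace Represents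

variable {z : Zipper} {F : ℤ → Bool} {p : ℤ}

theorem head_eq (h : z.Represents F p) : z.head = F p := by
  simpa [Zipper.head] using h.1 0

theorem moveRight (h : z.Represents F p) : z.moveRight.Represents F (p + 1) := by
  refine ⟨fun j => ?_, fun j => ?_⟩
  · rw [Zipper.moveRight, List.getD_tail, h.1]
    congr 1
    push_cast
    ring
  · cases j with
    | zero => simp [Zipper.moveRight, h.head_eq]
    | succ j =>
      simp only [Zipper.moveRight, List.getD_cons_succ, h.2]
      congr 1
      push_cast
      ring

theorem moveLeft (h : z.Represents F p) : z.moveLeft.Represents F (p - 1) := by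
  refine ⟨fun j => ?_, fun j => ?_⟩
  · cases j with
    | zero => simpa [Zipper.moveLeft] using h.2 0
    | succ j =>
      simp only [Zipper.moveLeft, List.getD_cons_succ, h.1]
      congr 1
      push_cast
      ring
  · rw [Zipper.moveLeft, List.getD_tail, h.2]
    congr 1
    push_cast
    ring

theorem move (h : z.Represents F p) (d : Bool) :
    (z.move d).Represents F (p + if d then 1 else -1) := by
  cases d
  · simpa [Zipper.move, ← sub_eq_add_neg] using h.moveLeft
  · simpa [Zipper.move] using h.moveRight

theorem write (h : z.Represents F p) (b : Bool) :
    (z.write b).Represents (Function.update F p b) p := by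
  refine ⟨fun j => ?_, fun j => ?_⟩
  · cases j with
    | zero => simp [Zipper.write]
    | succ j =>
      rw [Zipper.write, List.getD_cons_succ, List.getD_tail, h.1,
        Function.update_of_ne (by push_cast; omega)]
  · rw [Zipper.write, h.2, Function.update_of_ne (by omega)]

end Represents

end Zipper

namespace Machine

/-- Configurations with both tapes stored as zippers; unlike `Cfg`, this type is `Primcodable`. -/
abbrev ZCfg : Type := ℕ × Zipper × Zipper

def zstep (m : Machine) (c : ZCfg) : Option ZCfg :=
  (m[4 * c.1 + cond c.2.1.head 2 0 + cond c.2.2.head 1 0]?).map fun q =>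
    (q.1, c.2.1.move q.2.2.1, (c.2.2.write q.2.1).move q.2.2.2)

def zcfgAt (m : Machine) (w : List Bool) : ℕ → Option ZCfg
  | 0 => some (0, ([], w), ([], []))
  | t + 1 => (zcfgAt m w t).bind (zstep m)

def ZRel (w : List Bool) (c : ZCfg) (d : Cfg) : Prop :=
  c.1 = d.1 ∧ c.2.1.Represents (read w) d.2.1 ∧ c.2.2.Represents d.2.2.1 d.2.2.2

theorem ZRel.zstep {m : Machine} {w : List Bool} {c : ZCfg} {d : Cfg} (h : ZRel w c d) :
    Option.Rel (ZRel w) (zstep m c) (step m w d) := by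
  obtain ⟨hs, hin, hwork⟩ := h
  unfold Machine.zstep step
  rw [hs, hin.head_eq, hwork.head_eq]
  split
  next hq => rw [hq]; exact .none
  next hq => rw [hq]; exact .some ⟨rfl, hin.move _, (hwork.write _).move _⟩

theorem zcfgAt_rel (m : Machine) (w : List Bool) (t : ℕ) :
    Option.Rel (ZRel w) (zcfgAt m w t) (cfgAt m w t) := by
  induction t with
  | zero =>
    refine .some ⟨rfl, ⟨fun j => ?_, fun j => ?_⟩, ⟨fun j => ?_, fun j => ?_⟩⟩
    · simp [read]
    · rw [List.getD_nil, read, if_neg (by simp; omega)]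
    · simp
    · simp
  | succ t ih =>
    rw [zcfgAt, cfgAt]
    generalize zcfgAt m w t = c, cfgAt m w t = d at ih
    cases ih with
    | none => exact .none
    | some h => exact h.zstep

theorem zcfgAt_eq_none_iff {m : Machine} {w : List Bool} {t : ℕ} :
    zcfgAt m w t = none ↔ cfgAt m w t = none := by
  have h := zcfgAt_rel m w t
  generalize zcfgAt m w t = c, cfgAt m w t = d at h
  cases h <;> simp

end Machine

namespace Zipper

open Primrec

theorem primrec_head : Primrec Zipper.head :=
  (list_getD false).comp snd (const 0)

theorem primrec₂_move : Primrec₂ Zipper.move := by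
  have hz : Primrec fun a : Zipper × Bool => a.1 := fst
  have hRight : Primrec fun a : Zipper × Bool => a.1.moveRight :=
    (list_cons.comp (primrec_head.comp hz) (fst.comp hz)).pair (list_tail.comp (snd.comp hz))
  have hLeft : Primrec fun a : Zipper × Bool => a.1.moveLeft :=
    (list_tail.comp (fst.comp hz)).pair
      (list_cons.comp ((list_getD false).comp (fst.comp hz) (const 0)) (snd.comp hz))
  exact Primrec.cond snd hRight hLeft

theorem primrec₂_write : Primrec₂ Zipper.write :=
  (fst.comp fst).pair (list_cons.comp snd (list_tail.comp (snd.comp fst)))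

end Zipper

namespace Machine

open Primrec

theorem primrec₂_zstep : Primrec₂ zstep := by
  have hc : Primrec fun a : Machine × ZCfg => a.2 := snd
  have hidx : Primrec fun a : Machine × ZCfg =>
      4 * a.2.1 + cond a.2.2.1.head 2 0 + cond a.2.2.2.head 1 0 :=
    nat_add.comp
      (nat_add.comp (nat_mul.comp (const 4) (fst.comp hc))
        (Primrec.cond (Zipper.primrec_head.comp (fst.comp (snd.comp hc))) (const 2) (const 0)))
      (Primrec.cond (Zipper.primrec_head.comp (snd.comp (snd.comp hc))) (const 1) (const 0))
  have hnext : Primrec₂ fun (a : Machine × ZCfg) (q : ℕ × Bool × Bool × Bool) =>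
      ((q.1, a.2.2.1.move q.2.2.1, (a.2.2.2.write q.2.1).move q.2.2.2) : ZCfg) := by
    have hz : Primrec fun p : (Machine × ZCfg) × ℕ × Bool × Bool × Bool => p.1.2.2 :=
      snd.comp (hc.comp fst)
    have hq : Primrec fun p : (Machine × ZCfg) × ℕ × Bool × Bool × Bool => p.2 := snd
    exact (fst.comp hq).pair <|
      (Zipper.primrec₂_move.comp (fst.comp hz) (fst.comp (snd.comp (snd.comp hq)))).pair
        (Zipper.primrec₂_move.comp
          (Zipper.primrec₂_write.comp (snd.comp hz) (fst.comp (snd.comp hq)))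
          (snd.comp (snd.comp (snd.comp hq))))
  exact option_map (list_getElem?.comp fst hidx) hnext

theorem primrec_zcfgAt (w : List Bool) (t : ℕ) : Primrec fun m : Machine => zcfgAt m w t := by
  induction t with
  | zero => exact const _
  | succ t ih => exact option_bind ih primrec₂_zstep

theorem primrecPred_cfgAt_eq_none (w : List Bool) (t : ℕ) :
    PrimrecPred fun m : Machine => cfgAt m w t = none :=
  (Primrec.eq.comp (primrec_zcfgAt w t) (const none)).of_eq fun _ => zcfgAt_eq_none_iff

end Machine

theorem PrimrecPred.forall_mem_of_finite {α β : Type*} [Primcodable α] {p : β → α → Prop}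
    {s : Set β} (hs : s.Finite) (h : ∀ b ∈ s, PrimrecPred (p b)) :
    PrimrecPred fun a => ∀ b ∈ s, p b a := by
  classical
  obtain ⟨s, rfl⟩ := hs.exists_finset_coe
  clear hs
  induction s using Finset.induction_on with
  | empty =>
    exact (Primrec.primrecPred (p := fun _ : α => True) (Primrec.const true)).of_eq
      fun _ => by simp
  | insert b s _ ih =>
    refine ((h b (by simp)).and (ih fun b' hb' => h b' (by simp [hb']))).of_eq fun _ => ?_
    simp

theorem PrimrecPred.exists_mem_of_finite {α β : Type*} [Primcodable α] {p : β → α → Prop}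
    {s : Set β} (hs : s.Finite) (h : ∀ b ∈ s, PrimrecPred (p b)) :
    PrimrecPred fun a => ∃ b ∈ s, p b a :=
  (forall_mem_of_finite hs fun b hb => (h b hb).not).not.of_eq fun _ => by simp

theorem NNReal.finite_setOf_natCast_le (x : ℝ≥0) : {t : ℕ | (t : ℝ≥0) ≤ x}.Finite :=
  (Set.finite_Iic ⌊x⌋₊).subset fun _ h => Nat.le_floor h

namespace Machine

/-- Padding `v` with blanks does not change the run, so the first halting time on `v` is a time
bound that works for every input length `n ≥ |v|`. -/
theorem RunsInTime.exists_haltTime_le {m : Machine} {T : ℕ → ℝ≥0} (h : m.RunsInTime T)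
    (v : List Bool) :
    ∃ t : ℕ, (∀ n, v.length ≤ n → (t : ℝ≥0) ≤ T n) ∧ cfgAt m v (t + 1) = none := by
  classical
  have hhalt : ∃ t, cfgAt m v (t + 1) = none := (h v).imp fun _ => And.right
  refine ⟨Nat.find hhalt, fun n hn => ?_, Nat.find_spec hhalt⟩
  obtain ⟨t, ht, hstop⟩ := h (v ++ List.replicate (n - v.length) false)
  rw [cfgAt_eq_of_read_eq (read_append_replicate_false v _)] at hstop
  have hlen : (v ++ List.replicate (n - v.length) false).length = n := by simp; omega
  calc ((Nat.find hhalt : ℕ) : ℝ≥0) ≤ t := by exact_mod_cast Nat.find_min' hhalt hstop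
    _ ≤ T n := hlen ▸ ht

/-- Since `T n₀ < n₀ + 1`, an admissible time on a length-`n₀` prefix is at most `n₀`, and within
that time the run on any extension halts whenever the run on the prefix does. -/
theorem runsInTime_of_forall_length_le {m : Machine} {T : ℕ → ℝ≥0} {n₀ : ℕ}
    (hT : T n₀ < n₀ + 1)
    (hshort : ∀ w : List Bool, w.length < n₀ →
      ∃ t : ℕ, (t : ℝ≥0) ≤ T w.length ∧ cfgAt m w (t + 1) = none)
    (hprefix : ∀ v : List Bool, v.length = n₀ →
      ∃ t : ℕ, (∀ n, n₀ ≤ n → (t : ℝ≥0) ≤ T n) ∧ cfgAt m v (t + 1) = none) :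
    m.RunsInTime T := by
  intro w
  rcases lt_or_ge w.length n₀ with hw | hw
  · exact hshort w hw
  obtain ⟨t, ht, hstop⟩ := hprefix (w.take n₀) (by simpa using hw)
  have htn : t ≤ n₀ := by
    have hlt : (t : ℝ≥0) < (n₀ + 1 : ℕ) := by push_cast; exact (ht n₀ le_rfl).trans_lt hT
    exact Nat.lt_succ_iff.1 (by exact_mod_cast hlt)
  refine ⟨t, ht _ hw, cfgAt_succ_eq_none_of_read_le (fun i hi => ?_) (read_take_le w n₀) hstop⟩
  exact read_take_of_lt (by omega)

theorem runsInTime_iff {m : Machine} {T : ℕ → ℝ≥0} {n₀ : ℕ} (hT : T n₀ < n₀ + 1) :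
    m.RunsInTime T ↔
      (∀ w : List Bool, w.length < n₀ →
        ∃ t : ℕ, (t : ℝ≥0) ≤ T w.length ∧ cfgAt m w (t + 1) = none) ∧
      ∀ v : List Bool, v.length = n₀ →
        ∃ t : ℕ, (∀ n, n₀ ≤ n → (t : ℝ≥0) ≤ T n) ∧ cfgAt m v (t + 1) = none :=
  ⟨fun h => ⟨fun w _ => h w, fun v hv => hv ▸ h.exists_haltTime_le v⟩,
    fun h => runsInTime_of_forall_length_le hT h.1 h.2⟩

end Machine

open Machine in
theorem stmt_15_general (T : ℕ → ℝ≥0) (n₀ : ℕ) (hT : T n₀ < (n₀ : ℝ≥0) + 1) :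
    ComputablePred fun m : Machine => m.RunsInTime T := by
  have hshort := PrimrecPred.forall_mem_of_finite (List.finite_length_lt Bool n₀)
    fun w _ => PrimrecPred.exists_mem_of_finite (NNReal.finite_setOf_natCast_le (T w.length))
      fun t _ => primrecPred_cfgAt_eq_none w (t + 1)
  have hbound : {t : ℕ | ∀ n, n₀ ≤ n → (t : ℝ≥0) ≤ T n}.Finite :=
    (NNReal.finite_setOf_natCast_le (T n₀)).subset fun _ ht => ht n₀ le_rfl
  have hprefix := PrimrecPred.forall_mem_of_finite (List.finite_length_eq Bool n₀)
    fun v _ => PrimrecPred.exists_mem_of_finite hbound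
      fun t _ => primrecPred_cfgAt_eq_none v (t + 1)
  exact (hshort.and hprefix).computablePred.of_eq fun m => (runsInTime_iff hT).symm

/-- If `T(n₀) < n₀ + 1` for some `n₀` (and `⌊T⌋` is computable and `m ≤ T(n)` is uniformly
decidable), then it is decidable whether a given Turing machine runs in time `T`. -/
theorem stmt_15 (T : ℕ → ℝ≥0) (n₀ : ℕ) (hT : T n₀ < (n₀ : ℝ≥0) + 1)
    (hfloor : Computable fun n => ⌊T n⌋₊)
    (hdec : ComputablePred fun p : ℕ × ℕ => (p.1 : ℝ≥0) ≤ T p.2) :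
    ComputablePred fun m : Machine => m.RunsInTime T :=
  stmt_15_general T n₀ hT
end
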